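/- The following q-identity of fermionic type holds: ((-qt;q)_∞ (-t^{-1};q)_∞ (q;q)_∞²) / ((qt;q)_∞ (t^{-1};q)_∞ (-q;q)_∞²) = (t+1)/(t-1) + 2 Σ_{r=0}^∞ [ (-1)^r q^{r+1}t/(1 - q^{r+1}t) - (-1)^r q^{r+1}t^{-1}/(1 - q^{r+1}t^{-1}) ]. -/

import Mathlib

/-!
Write `Φ(t) = (-qt;q)_∞ (-q/t;q)_∞ (q;q)_∞² / ((qt;q)_∞ (q/t;q)_∞ (-q;q)_∞²)`, so that peeling the
first factor off `(-t⁻¹;q)_∞` and `(t⁻¹;q)_∞` turns the left side into `F(t) = (t+1)/(t-1) Φ(t)`;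
call the right side `G(t)`. Peeling one factor off every product, and the first term off each of the
two series, shows `F(qt) = -F(t)` and `G(qt) = -G(t)`. Since `Φ(1) = 1`, the difference
`K = F - G = (t+1)(Φ(t) - Φ(1))/(t-1) - (G(t) - (t+1)/(t-1))` has no pole at `t = 1`, so it is
holomorphic on the annulus `|q| < |t| < |q|⁻¹` and changes sign under `t ↦ qt`. Continued by this
functional equation from the fundamental domain `|q| < |t| ≤ 1`, it becomes a bounded holomorphic
function on `ℂ \ {0}`; by the removable singularity theorem and Liouville it is constant, and a
constant that changes sign under `t ↦ qt` is zero.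
-/

/-- The `q`-Pochhammer symbol `(a;q)_∞ = ∏_{r≥0} (1 - a q^r)`. -/
noncomputable def qpoch (a q : ℂ) : ℂ := ∏' r : ℕ, (1 - a * q ^ r)

open Filter Topology Metric Set

section QPochhammer

variable {q : ℂ}

lemma summable_norm_mul_pow (hq : ‖q‖ < 1) (a : ℂ) :
    Summable fun r : ℕ => ‖a * q ^ r‖ := by
  simpa [norm_pow] using (summable_geometric_of_lt_one (norm_nonneg q) hq).mul_left ‖a‖

lemma multipliable_qpoch (hq : ‖q‖ < 1) (a : ℂ) :
    Multipliable fun r : ℕ => 1 - a * q ^ r := by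
  simpa [sub_eq_add_neg] using
    multipliable_one_add_of_summable (f := fun r : ℕ => -(a * q ^ r))
      (by simpa using summable_norm_mul_pow hq a)

lemma qpoch_eq_one_sub_mul (hq : ‖q‖ < 1) (a : ℂ) :
    qpoch a q = (1 - a) * qpoch (q * a) q := by
  have hshift : ∀ r : ℕ, 1 - a * q ^ (r + 1) = 1 - q * a * q ^ r := fun r => by ring
  unfold qpoch
  rw [tprod_eq_zero_mul' ((multipliable_qpoch hq (q * a)).congr fun r => (hshift r).symm),
    pow_zero, mul_one, tprod_congr hshift]

lemma qpoch_zero_left : qpoch 0 q = 1 := by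
  simp [qpoch]

lemma qpoch_ne_zero (hq : ‖q‖ < 1) {a : ℂ} (h : ∀ r : ℕ, 1 - a * q ^ r ≠ 0) :
    qpoch a q ≠ 0 := by
  simpa [qpoch, sub_eq_add_neg] using
    tprod_one_add_ne_zero_of_summable (f := fun r : ℕ => -(a * q ^ r))
      (by simpa [sub_eq_add_neg] using h) (by simpa using summable_norm_mul_pow hq a)

lemma qpoch_ne_zero_of_norm_lt_one (hq : ‖q‖ < 1) {a : ℂ} (ha : ‖a‖ < 1) :
    qpoch a q ≠ 0 := by
  refine qpoch_ne_zero hq fun r h => ?_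
  have hlt : ‖a * q ^ r‖ < 1 := by
    rw [norm_mul, norm_pow]
    exact (mul_le_of_le_one_right (norm_nonneg a)
      (pow_le_one₀ (norm_nonneg q) hq.le)).trans_lt ha
  simp [← sub_eq_zero.1 h] at hlt

lemma differentiable_qpoch (hq : ‖q‖ < 1) : Differentiable ℂ fun a => qpoch a q := by
  intro a₀
  set R := ‖a₀‖ + 1
  have hprod := Summable.hasProdLocallyUniformlyOn_nat_one_add (K := ball (0 : ℂ) R)
    (f := fun r a => -(a * q ^ r)) isOpen_ball
    ((summable_geometric_of_lt_one (norm_nonneg q) hq).mul_left R)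
    (.of_forall fun r a ha => by
      rw [norm_neg, norm_mul, norm_pow]
      exact mul_le_mul_of_nonneg_right (mem_ball_zero_iff.1 ha).le (by positivity))
    fun r => by fun_prop
  have hdiff := hprod.differentiableOn (.of_forall fun s => DifferentiableOn.fun_finsetProd
    fun r _ => by fun_prop) isOpen_ball
  simp only [← sub_eq_add_neg] at hdiff
  exact hdiff.differentiableAt (isOpen_ball.mem_nhds (by simp [R]))

end QPochhammer

section QAnnulus

def qAnnulus (q : ℂ) : Set ℂ := {w | ‖q‖ < ‖w‖ ∧ ‖w‖ < ‖q‖⁻¹}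

def offQLattice (q : ℂ) : Set ℂ := {w | w ≠ 0 ∧ ∀ k : ℤ, w ≠ q ^ k}

variable {q : ℂ}

lemma isOpen_qAnnulus : IsOpen (qAnnulus q) :=
  (isOpen_lt continuous_const continuous_norm).inter (isOpen_lt continuous_norm continuous_const)

lemma ne_zero_of_mem_qAnnulus {w : ℂ} (hw : w ∈ qAnnulus q) : w ≠ 0 :=
  norm_pos_iff.1 ((norm_nonneg q).trans_lt hw.1)

lemma qAnnulus_subset_ball : qAnnulus q ⊆ ball 0 ‖q‖⁻¹ :=
  fun _ hw => mem_ball_zero_iff.2 hw.2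

lemma inv_mem_qAnnulus {w : ℂ} (hw : w ∈ qAnnulus q) : w⁻¹ ∈ qAnnulus q := by
  have hw0 : 0 < ‖w‖ := norm_pos_iff.2 (ne_zero_of_mem_qAnnulus hw)
  have hq0 : 0 < ‖q‖ := inv_pos.1 (hw0.trans hw.2)
  rw [qAnnulus, mem_ofPred_eq, norm_inv, lt_inv_comm₀ hq0 hw0, inv_lt_inv₀ hw0 hq0]
  exact hw.symm

lemma one_mem_qAnnulus (hq0 : q ≠ 0) (hq : ‖q‖ < 1) : (1 : ℂ) ∈ qAnnulus q :=
  ⟨by simpa using hq, by simpa using (one_lt_inv₀ (norm_pos_iff.2 hq0)).2 hq⟩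

lemma zpow_neg_mul_mem_qAnnulus_iff (hq0 : q ≠ 0) {z : ℂ} {m : ℤ} :
    q ^ (-m) * z ∈ qAnnulus q ↔ ‖q‖ ^ (m + 1) < ‖z‖ ∧ ‖z‖ < ‖q‖ ^ (m - 1) := by
  have hpow : 0 < ‖q‖ ^ m := zpow_pos (norm_pos_iff.2 hq0) m
  rw [qAnnulus, mem_ofPred_eq, norm_mul, norm_zpow, zpow_neg, inv_mul_eq_div, lt_div_iff₀ hpow,
    div_lt_iff₀ hpow, zpow_add_one₀ (norm_ne_zero_iff.2 hq0),
    zpow_sub_one₀ (norm_ne_zero_iff.2 hq0), mul_comm (‖q‖ ^ m) ‖q‖, mul_comm (‖q‖ ^ m)]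

lemma mem_offQLattice_of_one_lt_norm (hq0 : q ≠ 0) (hq : ‖q‖ < 1) {w : ℂ} (h1 : 1 < ‖w‖)
    (h2 : ‖w‖ < ‖q‖⁻¹) : w ∈ offQLattice q := by
  refine ⟨norm_pos_iff.1 (one_pos.trans h1), fun k hk => ?_⟩
  have hq0' : 0 < ‖q‖ := norm_pos_iff.2 hq0
  rw [hk, norm_zpow, ← zpow_neg_one] at h2
  rw [hk, norm_zpow, ← zpow_zero ‖q‖] at h1
  rw [zpow_lt_zpow_iff_right_of_lt_one₀ hq0' hq] at h1 h2
  omega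

lemma zpow_mul_mem_offQLattice (hq0 : q ≠ 0) {w : ℂ} (hw : w ∈ offQLattice q) (m : ℤ) :
    q ^ m * w ∈ offQLattice q := by
  refine ⟨mul_ne_zero (zpow_ne_zero m hq0) hw.1, fun k hk => hw.2 (k - m) ?_⟩
  rw [zpow_sub₀ hq0, ← hk]
  field_simp

lemma ne_one_of_mem_offQLattice {s : ℂ} (hs : s ∈ offQLattice q) : s ≠ 1 := by
  simpa using hs.2 0

lemma inv_mem_offQLattice {s : ℂ} (hs : s ∈ offQLattice q) : s⁻¹ ∈ offQLattice q :=
  ⟨inv_ne_zero hs.1, fun k hk => hs.2 (-k) (by rw [zpow_neg, ← hk, inv_inv])⟩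

lemma mul_mem_offQLattice (hq0 : q ≠ 0) {s : ℂ} (hs : s ∈ offQLattice q) :
    q * s ∈ offQLattice q := by
  simpa using zpow_mul_mem_offQLattice hq0 hs 1

lemma mem_offQLattice_of_one_sub_ne_zero (hq0 : q ≠ 0) {t : ℂ} (ht : t ≠ 0) (ht1 : t ≠ 1)
    (h1 : ∀ r : ℕ, 1 - q ^ (r + 1) * t ≠ 0) (h2 : ∀ r : ℕ, 1 - q ^ (r + 1) * t⁻¹ ≠ 0) :
    t ∈ offQLattice q := by
  refine ⟨ht, fun k hk => ?_⟩
  obtain ⟨n, rfl | rfl⟩ := Int.eq_nat_or_neg k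
  · cases n with
    | zero => exact ht1 (by simpa using hk)
    | succ r =>
      exact h2 r (by rw [hk, zpow_natCast, mul_inv_cancel₀ (pow_ne_zero _ hq0), sub_self])
  · cases n with
    | zero => exact ht1 (by simpa using hk)
    | succ r =>
      exact h1 r (by
        rw [hk, zpow_neg, zpow_natCast, mul_inv_cancel₀ (pow_ne_zero _ hq0), sub_self])

lemma qpoch_mul_ne_zero_of_mem_offQLattice (hq : ‖q‖ < 1) {s : ℂ} (hs : s ∈ offQLattice q) :
    qpoch (q * s) q ≠ 0 := by
  refine qpoch_ne_zero hq fun r h => hs.2 (-(r + 1 : ℕ)) ?_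
  rw [zpow_neg, zpow_natCast]
  exact eq_inv_of_mul_eq_one_left (by linear_combination -h)

end QAnnulus

section Antiperiodic

variable {E : Type*} [NormedAddCommGroup E] [NormedSpace ℂ E]

lemma apply_eq_apply_of_differentiableOn_compl_zero [CompleteSpace E] {f : ℂ → E}
    (hf : DifferentiableOn ℂ f {0}ᶜ) (hb : Bornology.IsBounded (f '' {0}ᶜ)) {z w : ℂ}
    (hz : z ≠ 0) (hw : w ≠ 0) : f z = f w := by
  set g := Function.update f 0 (limUnder (𝓝[≠] (0 : ℂ)) f)
  have hg : Differentiable ℂ g := by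
    rw [← differentiableOn_univ]
    refine Complex.differentiableOn_update_limUnder_of_bddAbove univ_mem ?_ ?_
    · rwa [← compl_eq_univ_sdiff]
    · obtain ⟨C, hC⟩ := hb.exists_norm_le
      refine ⟨C, ?_⟩
      rintro _ ⟨x, hx, rfl⟩
      exact hC _ (mem_image_of_mem f (by simpa using hx))
  have hgb : Bornology.IsBounded (range g) := by
    refine (hb.insert (g 0)).subset ?_
    rintro _ ⟨x, rfl⟩
    by_cases hx : x = 0
    · simp [hx]
    · exact mem_insert_of_mem _ ⟨x, hx, (Function.update_of_ne hx _ _).symm⟩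
  simpa [g, Function.update_of_ne hz, Function.update_of_ne hw] using
    hg.apply_eq_apply_of_bounded hgb z w

noncomputable def qIndex (q z : ℂ) : ℤ := ⌊Real.logb ‖q‖ ‖z‖⌋

variable {q : ℂ}

lemma qIndex_eq_iff (hq0 : q ≠ 0) (hq : ‖q‖ < 1) {z : ℂ} (hz : z ≠ 0) {m : ℤ} :
    qIndex q z = m ↔ ‖q‖ ^ (m + 1) < ‖z‖ ∧ ‖z‖ ≤ ‖q‖ ^ m := by
  have hq0' : 0 < ‖q‖ := norm_pos_iff.2 hq0
  have hz' : 0 < ‖z‖ := norm_pos_iff.2 hz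
  rw [qIndex, Int.floor_eq_iff, Real.le_logb_iff_rpow_le_of_base_lt_one hq0' hq hz',
    Real.logb_lt_iff_lt_rpow_of_base_lt_one hq0' hq hz', ← Int.cast_one, ← Int.cast_add,
    Real.rpow_intCast, Real.rpow_intCast, and_comm]

lemma norm_zpow_neg_qIndex_mul (hq0 : q ≠ 0) (hq : ‖q‖ < 1) {z : ℂ} (hz : z ≠ 0) :
    ‖q‖ < ‖q ^ (-qIndex q z) * z‖ ∧ ‖q ^ (-qIndex q z) * z‖ ≤ 1 := by
  obtain ⟨h1, h2⟩ := (qIndex_eq_iff hq0 hq hz).1 rfl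
  have hpow := zpow_pos (norm_pos_iff.2 hq0) (qIndex q z)
  rw [zpow_add_one₀ (norm_ne_zero_iff.2 hq0), mul_comm] at h1
  rw [norm_mul, norm_zpow, zpow_neg, inv_mul_eq_div, lt_div_iff₀ hpow, div_le_one hpow]
  exact ⟨h1, h2⟩

lemma zpow_neg_qIndex_mul_mem_qAnnulus (hq0 : q ≠ 0) (hq : ‖q‖ < 1) {z : ℂ} (hz : z ≠ 0) :
    q ^ (-qIndex q z) * z ∈ qAnnulus q :=
  ⟨(norm_zpow_neg_qIndex_mul hq0 hq hz).1, (norm_zpow_neg_qIndex_mul hq0 hq hz).2.trans_lt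
    ((one_lt_inv₀ (norm_pos_iff.2 hq0)).2 hq)⟩

/-- The continuation of `K` from the fundamental domain `‖q‖ < ‖w‖ ≤ 1` by `K (q w) = -K w`. -/
noncomputable def antiperiodicExt (q : ℂ) (K : ℂ → E) (z : ℂ) : E :=
  (-1 : ℂ) ^ qIndex q z • K (q ^ (-qIndex q z) * z)

variable {K : ℂ → E}

lemma antiperiodicExt_eq (hq0 : q ≠ 0) (hq : ‖q‖ < 1)
    (hFE : ∀ w ∈ offQLattice q, K (q * w) = -K w) {z : ℂ} {m : ℤ}
    (hm : q ^ (-m) * z ∈ qAnnulus q) :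
    antiperiodicExt q K z = (-1 : ℂ) ^ m • K (q ^ (-m) * z) := by
  obtain ⟨hlow, hupp⟩ := (zpow_neg_mul_mem_qAnnulus_iff hq0).1 hm
  have hz : z ≠ 0 := norm_pos_iff.1 ((zpow_pos (norm_pos_iff.2 hq0) _).trans hlow)
  rcases le_or_gt ‖z‖ (‖q‖ ^ m) with hle | hlt
  · rw [antiperiodicExt, (qIndex_eq_iff hq0 hq hz).2 ⟨hlow, hle⟩]
  · have hidx : qIndex q z = m - 1 :=
      (qIndex_eq_iff hq0 hq hz).2 ⟨by rwa [sub_add_cancel], hupp.le⟩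
    have hv : 1 < ‖q ^ (-m) * z‖ := by
      rwa [norm_mul, norm_zpow, zpow_neg, inv_mul_eq_div,
        one_lt_div (zpow_pos (norm_pos_iff.2 hq0) _)]
    have hshift : q ^ (-(m - 1)) * z = q * (q ^ (-m) * z) := by
      rw [neg_sub, sub_eq_add_neg, zpow_one_add₀ hq0, mul_assoc]
    rw [antiperiodicExt, hidx, hshift, hFE _ (mem_offQLattice_of_one_lt_norm hq0 hq hv hm.2),
      zpow_sub_one₀ (by norm_num), smul_neg, ← neg_smul]
    simp

lemma differentiableOn_antiperiodicExt (hq0 : q ≠ 0) (hq : ‖q‖ < 1)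
    (hK : DifferentiableOn ℂ K (qAnnulus q)) (hFE : ∀ w ∈ offQLattice q, K (q * w) = -K w) :
    DifferentiableOn ℂ (antiperiodicExt q K) {0}ᶜ := by
  intro z₀ hz₀
  set m := qIndex q z₀
  have hm : q ^ (-m) * z₀ ∈ qAnnulus q := zpow_neg_qIndex_mul_mem_qAnnulus hq0 hq hz₀
  have hloc : (fun z => (-1 : ℂ) ^ m • K (q ^ (-m) * z)) =ᶠ[𝓝 z₀] antiperiodicExt q K :=
    Filter.mem_of_superset ((isOpen_qAnnulus.preimage (continuous_const_mul _)).mem_nhds hm)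
      fun z hz => (antiperiodicExt_eq hq0 hq hFE hz).symm
  exact ((((hK.differentiableAt (isOpen_qAnnulus.mem_nhds hm)).comp z₀
    (differentiableAt_id.const_mul _)).const_smul _).congr_of_eventuallyEq
      hloc.symm).differentiableWithinAt

lemma isBounded_antiperiodicExt (hq0 : q ≠ 0) (hq : ‖q‖ < 1)
    (hK : DifferentiableOn ℂ K (qAnnulus q)) (hFE : ∀ w ∈ offQLattice q, K (q * w) = -K w) :
    Bornology.IsBounded (antiperiodicExt q K '' {0}ᶜ) := by
  set C := {w : ℂ | ‖q‖ ≤ ‖w‖ ∧ ‖w‖ ≤ 1}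
  have hC : IsCompact C := (isCompact_closedBall 0 1).of_isClosed_subset
    ((isClosed_le continuous_const continuous_norm).inter
      (isClosed_le continuous_norm continuous_const)) fun w hw => mem_closedBall_zero_iff.2 hw.2
  have hC0 : C ⊆ {0}ᶜ := fun w hw h => by
    have := hw.1
    rw [mem_singleton_iff.1 h, norm_zero] at this
    exact (norm_pos_iff.2 hq0).not_ge this
  obtain ⟨M, hM⟩ := hC.exists_bound_of_continuousOn
    ((differentiableOn_antiperiodicExt hq0 hq hK hFE).continuousOn.mono hC0)
  refine isBounded_iff_forall_norm_le.2 ⟨M, ?_⟩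
  rintro _ ⟨z, hz, rfl⟩
  have hv := zpow_neg_qIndex_mul_mem_qAnnulus hq0 hq hz
  have hKv : antiperiodicExt q K (q ^ (-qIndex q z) * z) = K (q ^ (-qIndex q z) * z) := by
    simpa using antiperiodicExt_eq hq0 hq hFE (m := 0) (by simpa using hv)
  calc ‖antiperiodicExt q K z‖ = ‖antiperiodicExt q K (q ^ (-qIndex q z) * z)‖ := by
        rw [hKv, antiperiodicExt, norm_smul, norm_zpow, norm_neg, norm_one, one_zpow, one_mul]
    _ ≤ M := hM _ ⟨hv.1.le, (norm_zpow_neg_qIndex_mul hq0 hq hz).2⟩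

lemma antiperiodicExt_mul (hq0 : q ≠ 0) (hq : ‖q‖ < 1)
    (hFE : ∀ w ∈ offQLattice q, K (q * w) = -K w) {z : ℂ} (hz : z ≠ 0) :
    antiperiodicExt q K (q * z) = -antiperiodicExt q K z := by
  have hshift : q ^ (-(qIndex q z + 1)) * (q * z) = q ^ (-qIndex q z) * z := by
    rw [neg_add, zpow_add₀ hq0, zpow_neg_one]
    field_simp
  rw [antiperiodicExt_eq hq0 hq hFE (m := qIndex q z + 1)
      (by rw [hshift]; exact zpow_neg_qIndex_mul_mem_qAnnulus hq0 hq hz),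
    hshift, zpow_add_one₀ (by norm_num), mul_neg_one, neg_smul, antiperiodicExt]

lemma apply_zpow_mul_eq_zero_iff {G : Type*} [AddGroup G] {f : ℂ → G} (hq0 : q ≠ 0)
    (hFE : ∀ w ∈ offQLattice q, f (q * w) = -f w) {w : ℂ} (hw : w ∈ offQLattice q) (m : ℤ) :
    f (q ^ m * w) = 0 ↔ f w = 0 := by
  induction m using Int.induction_on with
  | zero => simp
  | succ m ih =>
    rw [zpow_add_one₀ hq0, mul_comm _ q, mul_assoc, hFE _ (zpow_mul_mem_offQLattice hq0 hw m),
      neg_eq_zero, ih]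
  | pred m ih =>
    rw [← ih, show q ^ (-(m : ℤ)) * w = q * (q ^ (-(m : ℤ) - 1) * w) by
        rw [← mul_assoc, ← zpow_one_add₀ hq0, add_sub_cancel],
      hFE _ (zpow_mul_mem_offQLattice hq0 hw _), neg_eq_zero]

theorem eq_zero_of_differentiableOn_qAnnulus_of_antiperiodic [CompleteSpace E] (hq0 : q ≠ 0)
    (hq : ‖q‖ < 1)
    (hK : DifferentiableOn ℂ K (qAnnulus q)) (hFE : ∀ w ∈ offQLattice q, K (q * w) = -K w)
    {w : ℂ} (hw : w ∈ offQLattice q) : K w = 0 := by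
  have hconst : ∀ z ≠ 0, antiperiodicExt q K z = antiperiodicExt q K 1 := fun z hz =>
    apply_eq_apply_of_differentiableOn_compl_zero (differentiableOn_antiperiodicExt hq0 hq hK hFE)
      (isBounded_antiperiodicExt hq0 hq hK hFE) hz one_ne_zero
  have hH1 : antiperiodicExt q K 1 = 0 := by
    have h := antiperiodicExt_mul hq0 hq hFE one_ne_zero
    rw [mul_one, hconst q hq0] at h
    have h2 : (2 : ℂ) • antiperiodicExt q K 1 = 0 := by
      rw [two_smul]
      exact eq_neg_iff_add_eq_zero.1 h
    exact (smul_eq_zero.1 h2).resolve_left two_ne_zero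
  have hv := zpow_neg_qIndex_mul_mem_qAnnulus hq0 hq hw.1
  have hKv : antiperiodicExt q K (q ^ (-qIndex q w) * w) = K (q ^ (-qIndex q w) * w) := by
    simpa using antiperiodicExt_eq hq0 hq hFE (m := 0) (by simpa using hv)
  rw [← apply_zpow_mul_eq_zero_iff hq0 hFE hw, ← hKv,
    hconst _ (mul_ne_zero (zpow_ne_zero _ hq0) hw.1), hH1]

end Antiperiodic

lemma norm_div_one_sub_le {𝕜 : Type*} [NormedField 𝕜] {w : 𝕜} {c : ℝ} (hc : c < 1)
    (hw : ‖w‖ ≤ c) : ‖w / (1 - w)‖ ≤ ‖w‖ / (1 - c) := by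
  have h1 : 1 - c ≤ ‖1 - w‖ := by
    have := norm_sub_norm_le (1 : 𝕜) w
    rw [norm_one] at this
    linarith
  rw [norm_div]
  exact div_le_div_of_nonneg_left (norm_nonneg w) (by linarith) h1

namespace Fermionic

variable {q : ℂ}

noncomputable def altTerm (q s : ℂ) (r : ℕ) : ℂ :=
  (-1) ^ r * q ^ (r + 1) * s / (1 - q ^ (r + 1) * s)

noncomputable def altSum (q s : ℂ) : ℂ := ∑' r : ℕ, altTerm q s r

lemma norm_altTerm_le {s : ℂ} {c : ℝ} (hc : c < 1) {r : ℕ} (h : ‖q ^ (r + 1) * s‖ ≤ c) :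
    ‖altTerm q s r‖ ≤ ‖q ^ (r + 1) * s‖ / (1 - c) := by
  rw [altTerm, mul_assoc, mul_div_assoc, norm_mul, norm_pow, norm_neg, norm_one, one_pow, one_mul]
  exact norm_div_one_sub_le hc h

lemma summable_altTerm (hq : ‖q‖ < 1) (s : ℂ) : Summable (altTerm q s) := by
  have hsmall : ∀ᶠ r in atTop, ‖q ^ (r + 1) * s‖ ≤ 1 / 2 := by
    have : Tendsto (fun r : ℕ => ‖q‖ ^ (r + 1) * ‖s‖) atTop (𝓝 0) := by
      simpa using ((tendsto_pow_atTop_nhds_zero_of_lt_one (norm_nonneg q) hq).comp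
        (tendsto_add_atTop_nat 1)).mul_const ‖s‖
    filter_upwards [this.eventually (ge_mem_nhds (by norm_num : (0 : ℝ) < 1 / 2))] with r hr
    simpa [norm_pow] using hr
  refine .of_norm_bounded_eventually_nat ((summable_norm_mul_pow hq (q * s)).mul_left 2) ?_
  filter_upwards [hsmall] with r hr
  calc ‖altTerm q s r‖ ≤ ‖q ^ (r + 1) * s‖ / (1 - 1 / 2) := norm_altTerm_le (by norm_num) hr
    _ = 2 * ‖q * s * q ^ r‖ := by ring_nf

lemma altSum_eq_sub (hq : ‖q‖ < 1) (s : ℂ) :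
    altSum q s = q * s / (1 - q * s) - altSum q (q * s) := by
  rw [altSum, (summable_altTerm hq s).tsum_eq_zero_add, altSum, sub_eq_add_neg, ← tsum_neg]
  congr 1
  · simp [altTerm]
  · exact tsum_congr fun r => by simp only [altTerm]; ring_nf

lemma differentiableOn_altSum (hq : ‖q‖ < 1) :
    DifferentiableOn ℂ (altSum q) (ball 0 ‖q‖⁻¹) := by
  intro s₀ hs₀
  obtain ⟨ρ, hs₀ρ, hρ⟩ := exists_between (mem_ball_zero_iff.1 hs₀)
  set c := ρ * ‖q‖
  have hc : c < 1 := by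
    rcases eq_or_ne q 0 with rfl | hq0
    · simp [c]
    · simpa [c, hq0] using mul_lt_mul_of_pos_right hρ (norm_pos_iff.2 hq0)
  have hbound : ∀ r : ℕ, ∀ s ∈ ball (0 : ℂ) ρ, ‖q ^ (r + 1) * s‖ ≤ c * ‖q‖ ^ r := by
    intro r s hs
    calc ‖q ^ (r + 1) * s‖ = ‖q‖ ^ r * ‖q‖ * ‖s‖ := by rw [norm_mul, norm_pow, pow_succ]
      _ ≤ ‖q‖ ^ r * ‖q‖ * ρ := by gcongr; exact (mem_ball_zero_iff.1 hs).le
      _ = c * ‖q‖ ^ r := by ring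
  have hsmall : ∀ r : ℕ, ∀ s ∈ ball (0 : ℂ) ρ, ‖q ^ (r + 1) * s‖ ≤ c := fun r s hs =>
    (hbound r s hs).trans (mul_le_of_le_one_right
      (mul_nonneg ((norm_nonneg s₀).trans hs₀ρ.le) (norm_nonneg q))
      (pow_le_one₀ (norm_nonneg q) hq.le))
  have hdiff : DifferentiableOn ℂ (altSum q) (ball 0 ρ) := by
    refine Complex.differentiableOn_tsum_of_summable_norm
      (((summable_geometric_of_lt_one (norm_nonneg q) hq).mul_left c).div_const (1 - c))
      (fun r => ?_) isOpen_ball fun r s hs => ?_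
    · refine DifferentiableOn.div (by fun_prop) (by fun_prop) fun s hs h => ?_
      have := hsmall r s hs
      rw [← sub_eq_zero.1 h, norm_one] at this
      exact hc.not_ge this
    · exact (norm_altTerm_le hc (hsmall r s hs)).trans
        (div_le_div_of_nonneg_right (hbound r s hs) (by linarith))
  exact (hdiff.differentiableAt
    (isOpen_ball.mem_nhds (mem_ball_zero_iff.2 hs₀ρ))).differentiableWithinAt

noncomputable def ratio (q t : ℂ) : ℂ :=
  qpoch (-(q * t)) q * qpoch (-(q * t⁻¹)) q * qpoch q q ^ 2 /
    (qpoch (q * t) q * qpoch (q * t⁻¹) q * qpoch (-q) q ^ 2)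

noncomputable def productSide (q t : ℂ) : ℂ := (t + 1) / (t - 1) * ratio q t

noncomputable def seriesSide (q t : ℂ) : ℂ :=
  (t + 1) / (t - 1) + 2 * (altSum q t - altSum q t⁻¹)

/-- `productSide q t - seriesSide q t` for `t ≠ 1`, with the pole at `t = 1` removed using
`ratio q 1 = 1`. -/
noncomputable def sideDiff (q t : ℂ) : ℂ :=
  (t + 1) * dslope (ratio q) 1 t - 2 * (altSum q t - altSum q t⁻¹)

lemma lhs_eq_productSide (hq : ‖q‖ < 1) {t : ℂ} (ht : t ≠ 0) :
    qpoch (-(q * t)) q * qpoch (-t⁻¹) q * (qpoch q q) ^ 2 /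
      (qpoch (q * t) q * qpoch t⁻¹ q * (qpoch (-q) q) ^ 2) = productSide q t := by
  have hfrac : (1 + t⁻¹) / (1 - t⁻¹) = (t + 1) / (t - 1) := by
    rw [← mul_div_mul_right _ _ ht]
    congr 1 <;> field_simp
  rw [qpoch_eq_one_sub_mul hq (-t⁻¹), qpoch_eq_one_sub_mul hq t⁻¹, productSide, ratio, ← hfrac,
    mul_neg, sub_neg_eq_add, div_mul_div_comm]
  congr 1 <;> ring

lemma ratio_one (hq : ‖q‖ < 1) : ratio q 1 = 1 := by
  have hq' : qpoch q q ≠ 0 := qpoch_ne_zero_of_norm_lt_one hq hq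
  have hnq : qpoch (-q) q ≠ 0 := qpoch_ne_zero_of_norm_lt_one hq (by rwa [norm_neg])
  rw [ratio, inv_one, mul_one, div_eq_one_iff_eq (by simp [hq', hnq])]
  ring

lemma differentiableOn_ratio (hq0 : q ≠ 0) (hq : ‖q‖ < 1) :
    DifferentiableOn ℂ (ratio q) (qAnnulus q) := by
  intro t ht
  have ht0 : t ≠ 0 := ne_zero_of_mem_qAnnulus ht
  have hP := differentiable_qpoch hq
  have hqt : ‖q * t‖ < 1 := by
    rw [norm_mul]
    exact (mul_lt_mul_of_pos_left ht.2 (norm_pos_iff.2 hq0)).trans_eq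
      (mul_inv_cancel₀ (norm_ne_zero_iff.2 hq0))
  have hqt' : ‖q * t⁻¹‖ < 1 := by
    rw [norm_mul, norm_inv, ← div_eq_mul_inv, div_lt_one (norm_pos_iff.2 ht0)]
    exact ht.1
  have hden : qpoch (q * t) q * qpoch (q * t⁻¹) q * qpoch (-q) q ^ 2 ≠ 0 := by
    simp only [ne_eq, mul_eq_zero, pow_eq_zero_iff two_ne_zero, not_or]
    exact ⟨⟨qpoch_ne_zero_of_norm_lt_one hq hqt, qpoch_ne_zero_of_norm_lt_one hq hqt'⟩,
      qpoch_ne_zero_of_norm_lt_one hq (by rwa [norm_neg])⟩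
  refine DifferentiableAt.differentiableWithinAt ?_
  unfold ratio
  fun_prop (disch := assumption)

lemma differentiableOn_sideDiff (hq0 : q ≠ 0) (hq : ‖q‖ < 1) :
    DifferentiableOn ℂ (sideDiff q) (qAnnulus q) := by
  have hslope : DifferentiableOn ℂ (dslope (ratio q) 1) (qAnnulus q) :=
    (Complex.differentiableOn_dslope (isOpen_qAnnulus.mem_nhds (one_mem_qAnnulus hq0 hq))).2
      (differentiableOn_ratio hq0 hq)
  have hsum := (differentiableOn_altSum hq).mono qAnnulus_subset_ball
  have hsum_inv : DifferentiableOn ℂ (fun t => altSum q t⁻¹) (qAnnulus q) :=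
    hsum.comp (differentiableOn_inv.mono fun _ => ne_zero_of_mem_qAnnulus)
      fun _ => inv_mem_qAnnulus
  exact ((differentiableOn_id.add_const 1).mul hslope).sub ((hsum.sub hsum_inv).const_mul 2)

lemma sideDiff_eq (hq : ‖q‖ < 1) {t : ℂ} (ht1 : t ≠ 1) :
    sideDiff q t = productSide q t - seriesSide q t := by
  have ht1' : t - 1 ≠ 0 := sub_ne_zero.2 ht1
  rw [sideDiff, productSide, seriesSide, dslope_of_ne _ ht1, slope_def_field, ratio_one hq]
  field_simp
  ring

lemma productSide_mul (hq0 : q ≠ 0) (hq : ‖q‖ < 1) {s : ℂ} (hs0 : s ≠ 0) (hqs : q * s ≠ 1) :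
    productSide q (q * s) = -productSide q s := by
  have hqs1 : q * s - 1 ≠ 0 := sub_ne_zero.2 hqs
  have hqs1' : 1 - q * s ≠ 0 := sub_ne_zero.2 hqs.symm
  have hinv : q * (q * s)⁻¹ = s⁻¹ := by field_simp
  simp only [productSide, ratio, hinv]
  rw [qpoch_eq_one_sub_mul hq (-(q * s)), qpoch_eq_one_sub_mul hq (q * s),
    qpoch_eq_one_sub_mul hq (-s⁻¹), qpoch_eq_one_sub_mul hq s⁻¹]
  simp only [mul_neg, sub_neg_eq_add]
  field_simp
  ring

lemma seriesSide_mul (hq0 : q ≠ 0) (hq : ‖q‖ < 1) {s : ℂ} (hs0 : s ≠ 0) (hs1 : s ≠ 1)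
    (hqs : q * s ≠ 1) : seriesSide q (q * s) = -seriesSide q s := by
  have hs1' : s - 1 ≠ 0 := sub_ne_zero.2 hs1
  have hqs1 : q * s - 1 ≠ 0 := sub_ne_zero.2 hqs
  have hqs1' : 1 - q * s ≠ 0 := sub_ne_zero.2 hqs.symm
  have hsum_inv := altSum_eq_sub hq (q * s)⁻¹
  rw [show q * (q * s)⁻¹ = s⁻¹ by field_simp] at hsum_inv
  rw [seriesSide, seriesSide, hsum_inv, altSum_eq_sub hq s]
  field_simp
  ring

lemma sideDiff_mul (hq0 : q ≠ 0) (hq : ‖q‖ < 1) {s : ℂ} (hs : s ∈ offQLattice q) :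
    sideDiff q (q * s) = -sideDiff q s := by
  have hs1 := ne_one_of_mem_offQLattice hs
  have hqs1 := ne_one_of_mem_offQLattice (mul_mem_offQLattice hq0 hs)
  rw [sideDiff_eq hq hqs1, sideDiff_eq hq hs1, productSide_mul hq0 hq hs.1 hqs1,
    seriesSide_mul hq0 hq hs.1 hs1 hqs1, neg_sub_neg, neg_sub]

lemma productSide_eq_seriesSide (hq : ‖q‖ < 1) {t : ℂ} (ht : t ≠ 0) (ht1 : t ≠ 1)
    (h1 : ∀ r : ℕ, 1 - q ^ (r + 1) * t ≠ 0) (h2 : ∀ r : ℕ, 1 - q ^ (r + 1) * t⁻¹ ≠ 0) :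
    productSide q t = seriesSide q t := by
  rcases eq_or_ne q 0 with rfl | hq0
  · simp [productSide, seriesSide, ratio, altSum, altTerm, qpoch_zero_left]
  · rw [← sub_eq_zero, ← sideDiff_eq hq ht1]
    exact eq_zero_of_differentiableOn_qAnnulus_of_antiperiodic hq0 hq
      (differentiableOn_sideDiff hq0 hq) (fun s hs => sideDiff_mul hq0 hq hs)
      (mem_offQLattice_of_one_sub_ne_zero hq0 ht ht1 h1 h2)

end Fermionic

theorem fermionic_q_identity_general (q t : ℂ) (hq : ‖q‖ < 1) (ht : t ≠ 0) (ht1 : t ≠ 1)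
    (h1 : ∀ r : ℕ, 1 - q ^ (r + 1) * t ≠ 0)
    (h2 : ∀ r : ℕ, 1 - q ^ (r + 1) * t⁻¹ ≠ 0) :
    qpoch (-(q * t)) q * qpoch (-t⁻¹) q * (qpoch q q) ^ 2 /
      (qpoch (q * t) q * qpoch t⁻¹ q * (qpoch (-q) q) ^ 2)
    = (t + 1) / (t - 1) +
        2 * ∑' r : ℕ,
          ((-1 : ℂ) ^ r * q ^ (r + 1) * t / (1 - q ^ (r + 1) * t)
            - (-1 : ℂ) ^ r * q ^ (r + 1) * t⁻¹ / (1 - q ^ (r + 1) * t⁻¹)) := by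
  rw [Fermionic.lhs_eq_productSide hq ht, Fermionic.productSide_eq_seriesSide hq ht ht1 h1 h2,
    Fermionic.seriesSide, Fermionic.altSum, Fermionic.altSum,
    ← (Fermionic.summable_altTerm hq t).tsum_sub (Fermionic.summable_altTerm hq t⁻¹)]
  rfl

/-- the fermionic-type `q`-identity
`(-qt;q)_∞ (-t^{-1};q)_∞ (q;q)_∞² / ((qt;q)_∞ (t^{-1};q)_∞ (-q;q)_∞²)
 = (t+1)/(t-1) + 2 ∑_{r≥0} (-1)^r [ q^{r+1}t/(1-q^{r+1}t)
     - q^{r+1}t^{-1}/(1-q^{r+1}t^{-1}) ]`,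
for `|q| < 1` and `t` off the singular set. -/
theorem fermionic_q_identity (q t : ℂ) (hq : ‖q‖ < 1) (ht : t ≠ 0) (ht1 : t ≠ 1)
    (h1 : ∀ r : ℕ, 1 - q ^ (r + 1) * t ≠ 0)
    (h2 : ∀ r : ℕ, 1 - q ^ (r + 1) * t⁻¹ ≠ 0) (h3 : qpoch t⁻¹ q ≠ 0) :
    qpoch (-(q * t)) q * qpoch (-t⁻¹) q * (qpoch q q) ^ 2 /
      (qpoch (q * t) q * qpoch t⁻¹ q * (qpoch (-q) q) ^ 2)
    = (t + 1) / (t - 1) +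
        2 * ∑' r : ℕ,
          ((-1 : ℂ) ^ r * q ^ (r + 1) * t / (1 - q ^ (r + 1) * t)
            - (-1 : ℂ) ^ r * q ^ (r + 1) * t⁻¹ / (1 - q ^ (r + 1) * t⁻¹)) :=
  fermionic_q_identity_general q t hq ht ht1 h1 h2
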